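/- If c is a canonicalisation function, then the function n(R) = max_π J_R(π) − min_π J_R(π) (maximum and minimum over all policies π, which are attained) is a norm on the linear subspace Im(c) of ℛ: it is nonnegative, equals zero on Im(c) only at the zero reward function, is absolutely homogeneous, and satisfies the triangle inequality. -/
import Mathlib


namespace RewardPaper

/-- A probability distribution on a finite type, represented as a function. -/
def IsDist {X : Type*} [Fintype X] (p : X → ℝ) : Prop :=
  (∀ x, 0 ≤ p x) ∧ (∑ x, p x) = 1

/-- Reward functions on `S × A × S`. -/
abbrev Reward (S A : Type*) := S → A → S → ℝ

/-- A policy assigns to each state a probability distribution over actions. -/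
def IsPolicy {S A : Type*} [Fintype A] (π : S → A → ℝ) : Prop := ∀ s, IsDist (π s)

/-- The type of policies. -/
abbrev Policy (S A : Type*) [Fintype A] := {π : S → A → ℝ // IsPolicy π}

/-- The distribution over states at time `t` of the Markov chain induced by
`τ`, `μ0` and the policy `π`. -/
noncomputable def stateDist {S A : Type*} [Fintype S] [Fintype A]
    (τ : S → A → S → ℝ) (μ0 : S → ℝ) (π : S → A → ℝ) : ℕ → S → ℝ
  | 0 => μ0
  | (t + 1) => fun s' => ∑ s, ∑ a, stateDist τ μ0 π t s * π s a * τ s a s'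

/-- Policy evaluation function `J_R(π)`: expected discounted return of `π` under `R`. -/
noncomputable def J {S A : Type*} [Fintype S] [Fintype A]
    (τ : S → A → S → ℝ) (μ0 : S → ℝ) (γ : ℝ) (R : Reward S A)
    (π : S → A → ℝ) : ℝ :=
  ∑' t : ℕ, γ ^ t * ∑ s, ∑ a, ∑ s', stateDist τ μ0 π t s * π s a * τ s a s' * R s a s'

/-- The value function `V^π_R(s)`: expected discounted return starting from `s`. -/
noncomputable def V {S A : Type*} [Fintype S] [Fintype A] [DecidableEq S]
    (τ : S → A → S → ℝ) (γ : ℝ) (R : Reward S A) (π : S → A → ℝ) (s : S) : ℝ :=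
  J τ (fun s0 => if s0 = s then 1 else 0) γ R π

/-- Every state is reachable with positive probability under `τ` from `μ0`. -/
def AllReachable {S A : Type*} [Fintype S] [Fintype A]
    (τ : S → A → S → ℝ) (μ0 : S → ℝ) : Prop :=
  ∀ s, ∃ (π : S → A → ℝ) (t : ℕ), IsPolicy π ∧ 0 < stateDist τ μ0 π t s

/-- `R2` is produced by potential shaping of `R1`. -/
def PotentialShaping {S A : Type*} (γ : ℝ) (R1 R2 : Reward S A) : Prop :=
  ∃ Φ : S → ℝ, ∀ s a s', R2 s a s' = R1 s a s' + γ * Φ s' - Φ s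

/-- `R1` and `R2` differ by S'-redistribution with respect to `τ`. -/
def SRedist {S A : Type*} [Fintype S] (τ : S → A → S → ℝ) (R1 R2 : Reward S A) : Prop :=
  ∀ s a, (∑ s', τ s a s' * R1 s a s') = (∑ s', τ s a s' * R2 s a s')

/-- `R1` and `R2` differ by (a composition of) potential shaping and S'-redistribution. -/
def DifferBy {S A : Type*} [Fintype S] (γ : ℝ) (τ : S → A → S → ℝ)
    (R1 R2 : Reward S A) : Prop :=
  ∃ R' : Reward S A, PotentialShaping γ R1 R' ∧ SRedist τ R' R2

/-- A canonicalisation function. -/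
def IsCanon {S A : Type*} [Fintype S] (γ : ℝ) (τ : S → A → S → ℝ)
    (c : Reward S A → Reward S A) : Prop :=
  IsLinearMap ℝ c ∧ (∀ R, DifferBy γ τ R (c R)) ∧
    ∀ R1 R2, c R1 = c R2 ↔ DifferBy γ τ R1 R2

/-- `n` is a norm on the subset `X` of reward space. -/
def IsNormOn {S A : Type*} (X : Set (Reward S A)) (n : Reward S A → ℝ) : Prop :=
  (∀ x ∈ X, 0 ≤ n x) ∧
  (∀ x ∈ X, (n x = 0 ↔ x = 0)) ∧
  (∀ x ∈ X, ∀ r : ℝ, n (r • x) = |r| * n x) ∧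
  (∀ x ∈ X, ∀ y ∈ X, n (x + y) ≤ n x + n y)

/-- `p` is a norm on all of reward space. -/
def IsNorm {S A : Type*} (p : Reward S A → ℝ) : Prop := IsNormOn Set.univ p

/-- `m` is a metric on the subset `X` of reward space. -/
def IsMetricOn {S A : Type*} (X : Set (Reward S A)) (m : Reward S A → Reward S A → ℝ) : Prop :=
  (∀ x ∈ X, m x x = 0) ∧ (∀ x ∈ X, ∀ y ∈ X, 0 ≤ m x y) ∧
  (∀ x ∈ X, ∀ y ∈ X, m x y = m y x) ∧
  (∀ x ∈ X, ∀ y ∈ X, ∀ z ∈ X, m x z ≤ m x y + m y z)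

/-- `m` is an admissible metric on `X`: a metric bilipschitz equivalent to some norm. -/
def IsAdmissibleOn {S A : Type*} (X : Set (Reward S A))
    (m : Reward S A → Reward S A → ℝ) : Prop :=
  IsMetricOn X m ∧
  ∃ (p : Reward S A → ℝ) (l u : ℝ), IsNorm p ∧ 0 < l ∧ 0 < u ∧
    ∀ x ∈ X, ∀ y ∈ X, l * p (x - y) ≤ m x y ∧ m x y ≤ u * p (x - y)

/-- `d` is a STARC metric. -/
def IsSTARC {S A : Type*} [Fintype S] (γ : ℝ) (τ : S → A → S → ℝ)
    (d : Reward S A → Reward S A → ℝ) : Prop :=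
  ∃ (c : Reward S A → Reward S A) (n : Reward S A → ℝ)
    (m : Reward S A → Reward S A → ℝ) (s : Reward S A → Reward S A),
    IsCanon γ τ c ∧ IsNormOn (Set.range c) n ∧
    (∀ R, (n (c R) = 0 → s R = c R) ∧ (n (c R) ≠ 0 → s R = (n (c R))⁻¹ • c R)) ∧
    IsAdmissibleOn (Set.range s) m ∧
    ∀ R1 R2, d R1 R2 = m (s R1) (s R2)

/-- An EPIC-like canonicalisation function: standardises potential shaping only. -/
def IsEpicLikeCanon {S A : Type*} (γ : ℝ) (c : Reward S A → Reward S A) : Prop :=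
  IsLinearMap ℝ c ∧ (∀ R, PotentialShaping γ R (c R)) ∧
    ∀ R1 R2, c R1 = c R2 ↔ PotentialShaping γ R1 R2

/-- `d` is an EPIC-like metric. -/
def IsEpicLike {S A : Type*} (γ : ℝ) (d : Reward S A → Reward S A → ℝ) : Prop :=
  ∃ (c : Reward S A → Reward S A) (n : Reward S A → ℝ)
    (m : Reward S A → Reward S A → ℝ) (s : Reward S A → Reward S A),
    IsEpicLikeCanon γ c ∧ IsNormOn (Set.range c) n ∧
    (∀ R, (n (c R) = 0 → s R = c R) ∧ (n (c R) ≠ 0 → s R = (n (c R))⁻¹ • c R)) ∧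
    IsAdmissibleOn (Set.range c) m ∧
    ∀ R1 R2, d R1 R2 = m (s R1) (s R2)

/-- The maximal value of `J_R` over all policies. -/
noncomputable def maxJ {S A : Type*} [Fintype S] [Fintype A]
    (τ : S → A → S → ℝ) (μ0 : S → ℝ) (γ : ℝ) (R : Reward S A) : ℝ :=
  ⨆ π : Policy S A, J τ μ0 γ R π.1

/-- The minimal value of `J_R` over all policies. -/
noncomputable def minJ {S A : Type*} [Fintype S] [Fintype A]
    (τ : S → A → S → ℝ) (μ0 : S → ℝ) (γ : ℝ) (R : Reward S A) : ℝ :=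
  ⨅ π : Policy S A, J τ μ0 γ R π.1

/-- `R1` and `R2` induce the same ordering of policies. -/
def SameOrder {S A : Type*} [Fintype S] [Fintype A]
    (τ : S → A → S → ℝ) (μ0 : S → ℝ) (γ : ℝ) (R1 R2 : Reward S A) : Prop :=
  ∀ π π' : Policy S A,
    (J τ μ0 γ R1 π.1 ≤ J τ μ0 γ R1 π'.1 ↔ J τ μ0 γ R2 π.1 ≤ J τ μ0 γ R2 π'.1)

/-- Soundness of a pseudometric on reward space. -/
def Sound {S A : Type*} [Fintype S] [Fintype A]
    (τ : S → A → S → ℝ) (μ0 : S → ℝ) (γ : ℝ)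
    (d : Reward S A → Reward S A → ℝ) : Prop :=
  ∃ U : ℝ, 0 < U ∧ ∀ (R1 R2 : Reward S A) (π1 π2 : Policy S A),
    J τ μ0 γ R2 π1.1 ≤ J τ μ0 γ R2 π2.1 →
    J τ μ0 γ R1 π1.1 - J τ μ0 γ R1 π2.1 ≤
      U * (maxJ τ μ0 γ R1 - minJ τ μ0 γ R1) * d R1 R2

/-- Completeness of a pseudometric on reward space. -/
def Complete {S A : Type*} [Fintype S] [Fintype A]
    (τ : S → A → S → ℝ) (μ0 : S → ℝ) (γ : ℝ)
    (d : Reward S A → Reward S A → ℝ) : Prop :=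
  (∃ L : ℝ, 0 < L ∧ ∀ R1 R2 : Reward S A, ∃ π1 π2 : Policy S A,
    J τ μ0 γ R2 π1.1 ≤ J τ μ0 γ R2 π2.1 ∧
    L * (maxJ τ μ0 γ R1 - minJ τ μ0 γ R1) * d R1 R2 ≤
      J τ μ0 γ R1 π1.1 - J τ μ0 γ R1 π2.1) ∧
  ∀ R1 R2 : Reward S A, SameOrder τ μ0 γ R1 R2 → d R1 R2 = 0

/-- `d` is a pseudometric on reward space. -/
def IsPseudometric {S A : Type*} (d : Reward S A → Reward S A → ℝ) : Prop :=
  (∀ x, d x x = 0) ∧ (∀ x y, 0 ≤ d x y) ∧ (∀ x y, d x y = d y x) ∧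
    ∀ x y z, d x z ≤ d x y + d y z

/-- The EPIC canonicalisation. -/
noncomputable def CEpic {S A : Type*} [Fintype S] [Fintype A]
    (DS : S → ℝ) (DA : A → ℝ) (γ : ℝ) (R : Reward S A) : Reward S A :=
  fun s a s' =>
    R s a s'
      + γ * (∑ a', ∑ σ', DA a' * DS σ' * R s' a' σ')
      - (∑ a', ∑ σ', DA a' * DS σ' * R s a' σ')
      - γ * (∑ σ, ∑ a', ∑ σ', DS σ * DA a' * DS σ' * R σ a' σ')

/-- Mean of `f(S,A,S')` with `S,S' ~ DS` and `A ~ DA` independent. -/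
noncomputable def meanD {S A : Type*} [Fintype S] [Fintype A]
    (DS : S → ℝ) (DA : A → ℝ) (f : Reward S A) : ℝ :=
  ∑ s, ∑ a, ∑ s', DS s * DA a * DS s' * f s a s'

/-- Covariance of `f(S,A,S')` and `g(S,A,S')`. -/
noncomputable def covD {S A : Type*} [Fintype S] [Fintype A]
    (DS : S → ℝ) (DA : A → ℝ) (f g : Reward S A) : ℝ :=
  ∑ s, ∑ a, ∑ s', DS s * DA a * DS s' *
    (f s a s' - meanD DS DA f) * (g s a s' - meanD DS DA g)

/-- Variance of `f(S,A,S')`. -/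
noncomputable def varD {S A : Type*} [Fintype S] [Fintype A]
    (DS : S → ℝ) (DA : A → ℝ) (f : Reward S A) : ℝ :=
  covD DS DA f f

/-- Pearson correlation of `f(S,A,S')` and `g(S,A,S')`. -/
noncomputable def pearsonD {S A : Type*} [Fintype S] [Fintype A]
    (DS : S → ℝ) (DA : A → ℝ) (f g : Reward S A) : ℝ :=
  covD DS DA f g / (Real.sqrt (varD DS DA f) * Real.sqrt (varD DS DA g))

/-- The EPIC distance. -/
noncomputable def DEpic {S A : Type*} [Fintype S] [Fintype A]
    (DS : S → ℝ) (DA : A → ℝ) (γ : ℝ) (R1 R2 : Reward S A) : ℝ :=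
  Real.sqrt ((1 - pearsonD DS DA (CEpic DS DA γ R1) (CEpic DS DA γ R2)) / 2)

/-- The DARD canonicalisation. -/
noncomputable def CDard {S A : Type*} [Fintype S] [Fintype A]
    (τ : S → A → S → ℝ) (DA : A → ℝ) (γ : ℝ) (R : Reward S A) : Reward S A :=
  fun s a s' =>
    R s a s' + ∑ a', DA a' *
      (γ * (∑ σ'', τ s' a' σ'' * R s' a' σ'')
        - (∑ σ', τ s a' σ' * R s a' σ')
        - γ * (∑ σ', ∑ σ'', τ s a' σ' * τ s' a' σ'' * R σ' a' σ''))

/-- The DARD distance. -/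
noncomputable def DDard {S A : Type*} [Fintype S] [Fintype A]
    (τ : S → A → S → ℝ) (DS : S → ℝ) (DA : A → ℝ) (γ : ℝ) (R1 R2 : Reward S A) : ℝ :=
  Real.sqrt ((1 - pearsonD DS DA (CDard τ DA γ R1) (CDard τ DA γ R2)) / 2)

/-- The (unweighted) L2 norm on reward space. -/
noncomputable def l2Norm {S A : Type*} [Fintype S] [Fintype A] (R : Reward S A) : ℝ :=
  Real.sqrt (∑ s, ∑ a, ∑ s', (R s a s') ^ 2)

/-- A weighted L2 norm on reward space. -/
noncomputable def weightedL2 {S A : Type*} [Fintype S] [Fintype A]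
    (w : S → A → S → ℝ) (R : Reward S A) : ℝ :=
  Real.sqrt (∑ s, ∑ a, ∑ s', w s a s' * (R s a s') ^ 2)

/-- The L2 norm weighted by the product distribution `DS ⊗ DA ⊗ DS`. -/
noncomputable def l2NormD {S A : Type*} [Fintype S] [Fintype A]
    (DS : S → ℝ) (DA : A → ℝ) (R : Reward S A) : ℝ :=
  Real.sqrt (∑ s, ∑ a, ∑ s', DS s * DA a * DS s' * (R s a s') ^ 2)

/-- Expected discounted return of a reward function along a sequence of per-timestep
transition distributions. -/
noncomputable def Eret {S A : Type*} [Fintype S] [Fintype A]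
    (γ : ℝ) (R : Reward S A) (p : ℕ → (S × A × S) → ℝ) : ℝ :=
  ∑' t : ℕ, γ ^ t * ∑ x : S × A × S, p t x * R x.1 x.2.1 x.2.2


section NormProof

open Finset

set_option linter.unusedSectionVars false

variable {S A : Type*} [Fintype S] [Fintype A]

/-- The uniform policy. -/
noncomputable def unif (S A : Type*) [Fintype A] : S → A → ℝ :=
  fun _ _ => (Fintype.card A : ℝ)⁻¹

lemma isPolicy_unif [Nonempty A] : IsPolicy (unif S A) := by
  intro s
  constructor
  · intro a
    have h : (0:ℝ) < Fintype.card A := by exact_mod_cast Fintype.card_pos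
    exact inv_nonneg.2 h.le
  · simp only [unif, Finset.sum_const, Finset.card_univ, nsmul_eq_mul]
    have : (Fintype.card A : ℝ) ≠ 0 := by
      exact_mod_cast Fintype.card_pos.ne'
    field_simp

noncomputable instance policyNonempty [Nonempty A] : Nonempty (Policy S A) :=
  ⟨⟨unif S A, isPolicy_unif⟩⟩

lemma IsDist.le_one {X : Type*} [Fintype X] {p : X → ℝ} (hp : IsDist p) (x : X) :
    p x ≤ 1 := by
  rw [← hp.2]
  exact Finset.single_le_sum (fun i _ => hp.1 i) (Finset.mem_univ x)

/-- One step of the transition kernel applied to a state distribution. -/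
noncomputable def step (τ : S → A → S → ℝ) (π : S → A → ℝ) (μ : S → ℝ) : S → ℝ :=
  fun s' => ∑ s, ∑ a, μ s * π s a * τ s a s'

lemma stateDist_succ (τ : S → A → S → ℝ) (μ : S → ℝ) (π : S → A → ℝ) (t : ℕ) :
    stateDist τ μ π (t + 1) = step τ π (stateDist τ μ π t) := rfl

lemma stateDist_shift (τ : S → A → S → ℝ) (μ : S → ℝ) (π : S → A → ℝ) (t : ℕ) :
    stateDist τ μ π (t + 1) = stateDist τ (step τ π μ) π t := by
  induction t with
  | zero => rfl
  | succ t ih => rw [stateDist_succ, ih]; rfl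

variable {τ : S → A → S → ℝ} {π : S → A → ℝ} {μ : S → ℝ}

lemma isDist_step (hτ : ∀ s a, IsDist (τ s a)) (hπ : IsPolicy π) (hμ : IsDist μ) :
    IsDist (step τ π μ) := by
  constructor
  · intro s'
    refine Finset.sum_nonneg fun s _ => Finset.sum_nonneg fun a _ => ?_
    exact mul_nonneg (mul_nonneg (hμ.1 _) ((hπ _).1 _)) ((hτ _ _).1 _)
  · have h1 : ∑ s', step τ π μ s' = ∑ s, ∑ a, ∑ s', μ s * π s a * τ s a s' := by
      simp only [step]
      rw [Finset.sum_comm]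
      refine Finset.sum_congr rfl fun s _ => ?_
      rw [Finset.sum_comm]
    rw [h1]
    have h2 : ∀ s a, ∑ s', μ s * π s a * τ s a s' = μ s * π s a := by
      intro s a; rw [← Finset.mul_sum, (hτ s a).2, mul_one]
    simp_rw [h2]
    have h3 : ∀ s, ∑ a, μ s * π s a = μ s := by
      intro s; rw [← Finset.mul_sum, (hπ s).2, mul_one]
    simp_rw [h3, hμ.2]

lemma isDist_stateDist (hτ : ∀ s a, IsDist (τ s a)) (hπ : IsPolicy π) (hμ : IsDist μ)
    (t : ℕ) : IsDist (stateDist τ μ π t) := by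
  induction t with
  | zero => exact hμ
  | succ t ih => rw [stateDist_succ]; exact isDist_step hτ hπ ih

/-- Expected one-step reward from state distribution `μ`. -/
noncomputable def inn (τ : S → A → S → ℝ) (π : S → A → ℝ) (R : Reward S A) (μ : S → ℝ) : ℝ :=
  ∑ s, ∑ a, ∑ s', μ s * π s a * τ s a s' * R s a s'

lemma J_eq (τ : S → A → S → ℝ) (μ : S → ℝ) (γ : ℝ) (R : Reward S A) (π : S → A → ℝ) :
    J τ μ γ R π = ∑' t : ℕ, γ ^ t * inn τ π R (stateDist τ μ π t) := rfl

/-- Crude bound on rewards. -/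
noncomputable def Mb (R : Reward S A) : ℝ := ∑ s, ∑ a, ∑ s', |R s a s'|

lemma Mb_nonneg (R : Reward S A) : 0 ≤ Mb R := by
  refine Finset.sum_nonneg fun s _ => Finset.sum_nonneg fun a _ =>
    Finset.sum_nonneg fun s' _ => abs_nonneg _

lemma abs_inn_le (hτ : ∀ s a, IsDist (τ s a)) (hπ : IsPolicy π) (hμ : IsDist μ)
    (R : Reward S A) : |inn τ π R μ| ≤ Mb R := by
  refine (Finset.abs_sum_le_sum_abs _ _).trans (Finset.sum_le_sum fun s _ => ?_)
  refine (Finset.abs_sum_le_sum_abs _ _).trans (Finset.sum_le_sum fun a _ => ?_)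
  refine (Finset.abs_sum_le_sum_abs _ _).trans (Finset.sum_le_sum fun s' _ => ?_)
  rw [abs_mul]
  have h0 : (0:ℝ) ≤ μ s * π s a * τ s a s' :=
    mul_nonneg (mul_nonneg (hμ.1 _) ((hπ _).1 _)) ((hτ _ _).1 _)
  have h1 : μ s * π s a * τ s a s' ≤ 1 :=
    mul_le_one₀ (mul_le_one₀ (hμ.le_one s) ((hπ s).1 a) ((hπ s).le_one a)) ((hτ s a).1 s')
      ((hτ s a).le_one s')
  calc |μ s * π s a * τ s a s'| * |R s a s'|
      ≤ 1 * |R s a s'| := by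
        refine mul_le_mul_of_nonneg_right ?_ (abs_nonneg _)
        rw [abs_of_nonneg h0]; exact h1
    _ = |R s a s'| := one_mul _

variable {γ : ℝ}

lemma summable_J (hτ : ∀ s a, IsDist (τ s a)) (hπ : IsPolicy π) (hμ : IsDist μ)
    (hγ : γ ∈ Set.Ioo (0:ℝ) 1) (R : Reward S A) :
    Summable (fun t : ℕ => γ ^ t * inn τ π R (stateDist τ μ π t)) := by
  refine Summable.of_norm ?_
  refine Summable.of_nonneg_of_le (fun t => norm_nonneg _) (fun t => ?_)
    ((summable_geometric_of_lt_one hγ.1.le hγ.2).mul_left (Mb R))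
  rw [norm_mul, norm_pow, Real.norm_eq_abs, Real.norm_eq_abs, abs_of_pos hγ.1, mul_comm]
  exact mul_le_mul_of_nonneg_right
    (abs_inn_le hτ hπ (isDist_stateDist hτ hπ hμ t) R) (pow_nonneg hγ.1.le t)

lemma abs_J_le (hτ : ∀ s a, IsDist (τ s a)) (hπ : IsPolicy π) (hμ : IsDist μ)
    (hγ : γ ∈ Set.Ioo (0:ℝ) 1) (R : Reward S A) :
    |J τ μ γ R π| ≤ Mb R * (1 - γ)⁻¹ := by
  rw [J_eq]
  have hs := summable_J hτ hπ hμ hγ R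
  calc |∑' t : ℕ, γ ^ t * inn τ π R (stateDist τ μ π t)|
      ≤ ∑' t : ℕ, ‖γ ^ t * inn τ π R (stateDist τ μ π t)‖ :=
        norm_tsum_le_tsum_norm hs.norm
    _ ≤ ∑' t : ℕ, Mb R * γ ^ t := by
        refine Summable.tsum_le_tsum (fun t => ?_) hs.norm
          (((summable_geometric_of_lt_one hγ.1.le hγ.2).mul_left (Mb R)))
        rw [norm_mul, norm_pow, Real.norm_eq_abs, Real.norm_eq_abs, abs_of_pos hγ.1, mul_comm]
        exact mul_le_mul_of_nonneg_right
          (abs_inn_le hτ hπ (isDist_stateDist hτ hπ hμ t) R) (pow_nonneg hγ.1.le t)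
    _ = Mb R * (1 - γ)⁻¹ := by
        rw [tsum_mul_left, tsum_geometric_of_lt_one hγ.1.le hγ.2]

lemma inn_add (R1 R2 : Reward S A) : inn τ π (R1 + R2) μ = inn τ π R1 μ + inn τ π R2 μ := by
  simp only [inn, Pi.add_apply, mul_add, Finset.sum_add_distrib]

lemma inn_smul (r : ℝ) (R : Reward S A) : inn τ π (r • R) μ = r * inn τ π R μ := by
  simp only [inn, Pi.smul_apply, smul_eq_mul, Finset.mul_sum]
  refine Finset.sum_congr rfl fun s _ => Finset.sum_congr rfl fun a _ =>
    Finset.sum_congr rfl fun s' _ => by ring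

lemma J_add (hτ : ∀ s a, IsDist (τ s a)) (hπ : IsPolicy π) (hμ : IsDist μ)
    (hγ : γ ∈ Set.Ioo (0:ℝ) 1) (R1 R2 : Reward S A) :
    J τ μ γ (R1 + R2) π = J τ μ γ R1 π + J τ μ γ R2 π := by
  rw [J_eq, J_eq, J_eq, ← Summable.tsum_add (summable_J hτ hπ hμ hγ R1) (summable_J hτ hπ hμ hγ R2)]
  exact tsum_congr fun t => by rw [inn_add]; ring

lemma J_smul (r : ℝ) (R : Reward S A) (μ : S → ℝ) : J τ μ γ (r • R) π = r * J τ μ γ R π := by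
  rw [J_eq, J_eq, ← tsum_mul_left]
  exact tsum_congr fun t => by rw [inn_smul]; ring

lemma J_zero (μ : S → ℝ) : J τ μ γ (0 : Reward S A) π = 0 := by
  rw [J_eq]
  have : ∀ t : ℕ, γ ^ t * inn τ π (0 : Reward S A) (stateDist τ μ π t) = 0 := by
    intro t
    simp [inn]
  simp only [this, tsum_zero]

end NormProof
section NormProof2

open Finset

set_option linter.unusedSectionVars false

variable {S A : Type*} [Fintype S] [Fintype A]
variable {τ : S → A → S → ℝ} {π : S → A → ℝ} {μ : S → ℝ} {γ : ℝ}

lemma sum_rot {α β δ : Type*} [Fintype α] [Fintype β] [Fintype δ] (f : α → β → δ → ℝ) :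
    ∑ a, ∑ b, ∑ c, f a b c = ∑ c, ∑ a, ∑ b, f a b c := by
  have h : ∀ a : α, ∑ b, ∑ c, f a b c = ∑ c, ∑ b, f a b c := fun a => Finset.sum_comm
  simp_rw [h]
  exact Finset.sum_comm

lemma inn_eq_pair (R : Reward S A) :
    inn τ π R μ = ∑ s, μ s * ∑ a, π s a * ∑ s', τ s a s' * R s a s' := by
  refine Finset.sum_congr rfl fun s _ => ?_
  rw [Finset.mul_sum]
  refine Finset.sum_congr rfl fun a _ => ?_
  simp only [Finset.mul_sum]
  exact Finset.sum_congr rfl fun s' _ => by ring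

lemma pair_step (Φ : S → ℝ) :
    ∑ s', step τ π μ s' * Φ s' = ∑ s, μ s * ∑ a, π s a * ∑ s', τ s a s' * Φ s' := by
  calc ∑ s', step τ π μ s' * Φ s'
      = ∑ s', ∑ s, ∑ a, μ s * π s a * τ s a s' * Φ s' := by
        refine Finset.sum_congr rfl fun s' _ => ?_
        simp only [step, Finset.sum_mul]
    _ = ∑ s, ∑ s', ∑ a, μ s * π s a * τ s a s' * Φ s' := Finset.sum_comm
    _ = ∑ s, μ s * ∑ a, π s a * ∑ s', τ s a s' * Φ s' := by
        refine Finset.sum_congr rfl fun s _ => ?_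
        rw [Finset.sum_comm, Finset.mul_sum]
        refine Finset.sum_congr rfl fun a _ => ?_
        simp only [Finset.mul_sum]
        exact Finset.sum_congr rfl fun s' _ => by ring

lemma J_rec (hτ : ∀ s a, IsDist (τ s a)) (hπ : IsPolicy π) (hμ : IsDist μ)
    (hγ : γ ∈ Set.Ioo (0:ℝ) 1) (R : Reward S A) :
    J τ μ γ R π = inn τ π R μ + γ * J τ (step τ π μ) γ R π := by
  rw [J_eq, Summable.tsum_eq_zero_add (summable_J hτ hπ hμ hγ R)]
  congr 1
  · simp [stateDist]
  · rw [J_eq, ← tsum_mul_left]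
    refine tsum_congr fun t => ?_
    rw [stateDist_shift]
    ring

variable [DecidableEq S]

/-- Point mass at a state. -/
noncomputable def delta (s : S) : S → ℝ := fun s0 => if s0 = s then 1 else 0

lemma isDist_delta (s : S) : IsDist (delta s) := by
  constructor
  · intro x; unfold delta; split <;> norm_num
  · simp [delta]

lemma stateDist_delta (t : ℕ) (x : S) :
    stateDist τ μ π t x = ∑ s, μ s * stateDist τ (delta s) π t x := by
  induction t generalizing x with
  | zero =>
    show μ x = ∑ s, μ s * delta s x
    simp [delta, mul_ite]
  | succ t ih =>
    show ∑ sb, ∑ a, stateDist τ μ π t sb * π sb a * τ sb a x = _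
    have h : ∀ sb a, stateDist τ μ π t sb * π sb a * τ sb a x
        = ∑ s, μ s * (stateDist τ (delta s) π t sb * π sb a * τ sb a x) := by
      intro sb a
      rw [ih sb, Finset.sum_mul, Finset.sum_mul]
      exact Finset.sum_congr rfl fun s _ => by ring
    simp_rw [h]
    rw [sum_rot]
    refine Finset.sum_congr rfl fun s _ => ?_
    show _ = μ s * ∑ sb, ∑ a, stateDist τ (delta s) π t sb * π sb a * τ sb a x
    rw [Finset.mul_sum]
    refine Finset.sum_congr rfl fun sb _ => ?_
    rw [Finset.mul_sum]

lemma J_eq_sum_delta (hτ : ∀ s a, IsDist (τ s a)) (hπ : IsPolicy π) (hμ : IsDist μ)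
    (hγ : γ ∈ Set.Ioo (0:ℝ) 1) (R : Reward S A) :
    J τ μ γ R π = ∑ s, μ s * J τ (delta s) γ R π := by
  have hinn : ∀ t, inn τ π R (stateDist τ μ π t)
      = ∑ s, μ s * inn τ π R (stateDist τ (delta s) π t) := by
    intro t
    calc inn τ π R (stateDist τ μ π t)
        = ∑ x, ∑ s, μ s * (stateDist τ (delta s) π t x
            * ∑ a, π x a * ∑ s', τ x a s' * R x a s') := by
          rw [inn_eq_pair]
          refine Finset.sum_congr rfl fun x _ => ?_
          rw [stateDist_delta, Finset.sum_mul]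
          exact Finset.sum_congr rfl fun s _ => by ring
      _ = ∑ s, μ s * inn τ π R (stateDist τ (delta s) π t) := by
          rw [Finset.sum_comm]
          refine Finset.sum_congr rfl fun s _ => ?_
          rw [inn_eq_pair, Finset.mul_sum]
  rw [J_eq]
  calc ∑' t : ℕ, γ ^ t * inn τ π R (stateDist τ μ π t)
      = ∑' t : ℕ, ∑ s, μ s * (γ ^ t * inn τ π R (stateDist τ (delta s) π t)) := by
        refine tsum_congr fun t => ?_
        rw [hinn t, Finset.mul_sum]
        exact Finset.sum_congr rfl fun s _ => by ring
    _ = ∑ s, μ s * J τ (delta s) γ R π := by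
        rw [Summable.tsum_finsetSum (fun s _ => ((summable_J hτ hπ (isDist_delta s) hγ R).mul_left (μ s)))]
        exact Finset.sum_congr rfl fun s _ => tsum_mul_left

lemma bellman (hτ : ∀ s a, IsDist (τ s a)) (hπ : IsPolicy π)
    (hγ : γ ∈ Set.Ioo (0:ℝ) 1) (R : Reward S A) (s : S) :
    J τ (delta s) γ R π
      = ∑ a, π s a * ((∑ s', τ s a s' * R s a s')
          + γ * ∑ s', τ s a s' * J τ (delta s') γ R π) := by
  rw [J_rec hτ hπ (isDist_delta s) hγ R,
    J_eq_sum_delta hτ hπ (isDist_step hτ hπ (isDist_delta s)) hγ R]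
  have h1 : inn τ π R (delta s) = ∑ a, π s a * ∑ s', τ s a s' * R s a s' := by
    rw [inn_eq_pair]
    simp only [delta, ite_mul, one_mul, zero_mul]
    rw [Finset.sum_ite_eq' Finset.univ s fun x => ∑ a, π x a * ∑ s', τ x a s' * R x a s']
    simp
  have h2 : ∑ s', step τ π (delta s) s' * J τ (delta s') γ R π
      = ∑ a, π s a * ∑ s', τ s a s' * J τ (delta s') γ R π := by
    rw [pair_step]
    simp only [delta, ite_mul, one_mul, zero_mul]
    rw [Finset.sum_ite_eq' Finset.univ s
      fun x => ∑ a, π x a * ∑ s', τ x a s' * J τ (delta s') γ R π]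
    simp
  rw [h1, h2]
  simp only [mul_add, Finset.sum_add_distrib, Finset.mul_sum]
  congr 1
  exact Finset.sum_congr rfl fun a _ => Finset.sum_congr rfl fun s' _ => by ring

end NormProof2
section NormProof3

open Finset

set_option linter.unusedSectionVars false
set_option maxHeartbeats 1000000

variable {S A : Type*} [Fintype S] [Fintype A]
variable {τ : S → A → S → ℝ} {γ : ℝ}

lemma stateDist_pos (hτ : ∀ s a, IsDist (τ s a)) {μ0 : S → ℝ} (hμ0 : IsDist μ0)
    {π'' π' : S → A → ℝ} (hπ'' : IsPolicy π'') (hπ' : IsPolicy π')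
    (hfull : ∀ s a, 0 < π' s a)
    {t : ℕ} {s : S} (h : 0 < stateDist τ μ0 π'' t s) : 0 < stateDist τ μ0 π' t s := by
  induction t generalizing s with
  | zero => exact h
  | succ t ih =>
    rw [stateDist_succ] at h ⊢
    simp only [step] at h ⊢
    have hex : ∃ s0, 0 < ∑ a, stateDist τ μ0 π'' t s0 * π'' s0 a * τ s0 a s := by
      by_contra hc
      push_neg at hc
      exact absurd (Finset.sum_nonpos fun s0 _ => hc s0) (not_le.2 h)
    obtain ⟨s0, hs0⟩ := hex
    have hex2 : ∃ a, 0 < stateDist τ μ0 π'' t s0 * π'' s0 a * τ s0 a s := by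
      by_contra hc
      push_neg at hc
      exact absurd (Finset.sum_nonpos fun a _ => hc a) (not_le.2 hs0)
    obtain ⟨a, ha⟩ := hex2
    have hdn := (isDist_stateDist hτ hπ'' hμ0 t).1 s0
    have hd : 0 < stateDist τ μ0 π'' t s0 := by
      rcases hdn.lt_or_eq with h' | h'
      · exact h'
      · rw [← h'] at ha; simp at ha
    have hτpos : 0 < τ s0 a s := by
      rcases ((hτ s0 a).1 s).lt_or_eq with h' | h'
      · exact h'
      · rw [← h'] at ha; simp at ha
    have hterm : 0 < stateDist τ μ0 π' t s0 * π' s0 a * τ s0 a s :=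
      mul_pos (mul_pos (ih hd) (hfull s0 a)) hτpos
    have hinner : 0 < ∑ a, stateDist τ μ0 π' t s0 * π' s0 a * τ s0 a s :=
      lt_of_lt_of_le hterm (Finset.single_le_sum
        (fun a' _ => mul_nonneg (mul_nonneg ((isDist_stateDist hτ hπ' hμ0 t).1 s0)
          (hfull s0 a').le) ((hτ s0 a').1 s)) (Finset.mem_univ a))
    refine lt_of_lt_of_le hinner (Finset.single_le_sum
      (f := fun s1 => ∑ a, stateDist τ μ0 π' t s1 * π' s1 a * τ s1 a s)
      (fun s1 _ => Finset.sum_nonneg fun a' _ =>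
        mul_nonneg (mul_nonneg ((isDist_stateDist hτ hπ' hμ0 t).1 s1)
          (hfull s1 a').le) ((hτ s1 a').1 s)) (Finset.mem_univ s0))

variable [DecidableEq S] [DecidableEq A] [Nonempty A]

lemma differBy_zero_of_J_const
    (hτ : ∀ s a, IsDist (τ s a)) {μ0 : S → ℝ} (hμ0 : IsDist μ0)
    (hγ : γ ∈ Set.Ioo (0:ℝ) 1) (hreach : AllReachable τ μ0) (R : Reward S A)
    (hconst : ∀ π' : Policy S A, J τ μ0 γ R π'.1 = J τ μ0 γ R (unif S A)) :
    DifferBy γ τ R 0 := by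
  have hπu : IsPolicy (unif S A) := isPolicy_unif
  set πu := unif S A with hπudef
  set Φ : S → ℝ := fun s => J τ (delta s) γ R πu with hΦdef
  set Q : S → A → ℝ := fun s a =>
    (∑ s', τ s a s' * R s a s') + γ * ∑ s', τ s a s' * Φ s' with hQdef
  have hbell : ∀ s, Φ s = ∑ a, πu s a * Q s a := by
    intro s
    exact bellman hτ hπu hγ R s
  have key : ∀ s0 a0, Q s0 a0 = Φ s0 := by
    intro s0 a0
    -- the deviation policy
    set π' : S → A → ℝ := fun s a =>
      if s = s0 then (πu s a + (if a = a0 then 1 else 0)) / 2 else πu s a with hπ'def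
    have hπ' : IsPolicy π' := by
      intro s
      constructor
      · intro a
        simp only [hπ'def]
        split
        · have h1 := (hπu s).1 a
          split <;> linarith
        · exact (hπu s).1 a
      · simp only [hπ'def]
        split
        · rw [← Finset.sum_div, Finset.sum_add_distrib, (hπu s).2,
            Finset.sum_ite_eq' Finset.univ a0 (fun _ => (1:ℝ))]
          norm_num
        · exact (hπu s).2
    have hfull : ∀ s a, 0 < π' s a := by
      intro s a
      have h1 : (0:ℝ) < πu s a := by
        simp only [hπudef, unif]
        have h : (0:ℝ) < Fintype.card A := by exact_mod_cast Fintype.card_pos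
        exact inv_pos.2 h
      simp only [hπ'def]
      split
      · split <;> linarith
      · exact h1
    have hbell' : ∀ s, s ≠ s0 → ∑ a, π' s a * Q s a = Φ s := by
      intro s hs
      rw [hbell s]
      refine Finset.sum_congr rfl fun a _ => ?_
      simp only [hπ'def, if_neg hs]
    have hg0 : ∑ a, π' s0 a * Q s0 a = Φ s0 + (Q s0 a0 - Φ s0) / 2 := by
      have h : ∀ a, π' s0 a * Q s0 a
          = (πu s0 a * Q s0 a) / 2 + (if a = a0 then Q s0 a0 else 0) / 2 := by
        intro a
        simp only [hπ'def, if_pos rfl]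
        split
        · rename_i hh; subst hh; ring
        · ring
      simp_rw [h]
      rw [Finset.sum_add_distrib, ← Finset.sum_div, ← Finset.sum_div,
        Finset.sum_ite_eq' Finset.univ a0 (fun _ => Q s0 a0), ← hbell s0]
      simp only [Finset.mem_univ, if_pos]
      ring
    set E : (S → ℝ) → ℝ := fun μ => J τ μ γ R π' - ∑ s, μ s * Φ s with hEdef
    have hErec : ∀ μ : S → ℝ, IsDist μ →
        E μ = μ s0 * ((Q s0 a0 - Φ s0) / 2) + γ * E (step τ π' μ) := by
      intro μ hμd
      have h1 : J τ μ γ R π' = inn τ π' R μ + γ * J τ (step τ π' μ) γ R π' :=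
        J_rec hτ hπ' hμd hγ R
      have hG : ∀ s, ∑ a, π' s a * Q s a
          = (∑ a, π' s a * ∑ s', τ s a s' * R s a s')
            + γ * ∑ a, π' s a * ∑ s', τ s a s' * Φ s' := by
        intro s
        simp only [hQdef, mul_add, Finset.sum_add_distrib, Finset.mul_sum]
        congr 1
        exact Finset.sum_congr rfl fun a _ => Finset.sum_congr rfl fun s' _ => by ring
      have h2 : inn τ π' R μ + γ * ∑ s, step τ π' μ s * Φ s
          = ∑ s, μ s * ∑ a, π' s a * Q s a := by
        rw [inn_eq_pair, pair_step, Finset.mul_sum, ← Finset.sum_add_distrib]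
        refine Finset.sum_congr rfl fun s _ => ?_
        rw [hG s]
        ring
      have h4 : ∑ s, μ s * (∑ a, π' s a * Q s a) - ∑ s, μ s * Φ s
          = μ s0 * ((Q s0 a0 - Φ s0) / 2) := by
        rw [← Finset.sum_sub_distrib, Finset.sum_eq_single s0]
        · rw [hg0]; ring
        · intro s _ hs; rw [hbell' s hs]; ring
        · intro hs; exact absurd (Finset.mem_univ s0) hs
      have h5 : γ * E (step τ π' μ)
          = γ * J τ (step τ π' μ) γ R π' - γ * ∑ s, step τ π' μ s * Φ s := by
        simp only [hEdef]; ring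
      simp only [hEdef]
      rw [h1, h5]
      linarith [h2, h4]
    have hunroll : ∀ T : ℕ, E μ0
        = (∑ t ∈ Finset.range T,
            γ ^ t * (stateDist τ μ0 π' t s0 * ((Q s0 a0 - Φ s0) / 2)))
          + γ ^ T * E (stateDist τ μ0 π' T) := by
      intro T
      induction T with
      | zero => simp [stateDist]
      | succ T ih =>
        rw [ih, Finset.sum_range_succ,
          hErec _ (isDist_stateDist hτ hπ' hμ0 T), ← stateDist_succ]
        ring
    have hE0 : E μ0 = 0 := by
      have h1 : J τ μ0 γ R π' = J τ μ0 γ R πu := hconst ⟨π', hπ'⟩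
      have h2 : J τ μ0 γ R πu = ∑ s, μ0 s * Φ s := J_eq_sum_delta hτ hπu hμ0 hγ R
      simp only [hEdef]
      rw [h1, h2]; ring
    have h1γ : (0:ℝ) < 1 - γ := by linarith [hγ.2]
    set C : ℝ := Mb R * (1 - γ)⁻¹ + ∑ s, |Φ s| with hCdef
    have hC0 : 0 ≤ C := add_nonneg (mul_nonneg (Mb_nonneg R) (inv_nonneg.2 h1γ.le))
      (Finset.sum_nonneg fun s _ => abs_nonneg _)
    have hCb : ∀ μ : S → ℝ, IsDist μ → |E μ| ≤ C := by
      intro μ hμd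
      simp only [hEdef]
      refine (abs_sub _ _).trans (add_le_add (abs_J_le hτ hπ' hμd hγ R) ?_)
      refine (Finset.abs_sum_le_sum_abs _ _).trans (Finset.sum_le_sum fun s _ => ?_)
      rw [abs_mul, abs_of_nonneg (hμd.1 s)]
      exact mul_le_of_le_one_left (abs_nonneg _) (hμd.le_one s)
    obtain ⟨π'', t0, hπ''pol, hpos⟩ := hreach s0
    have hpos' : 0 < stateDist τ μ0 π' t0 s0 :=
      stateDist_pos hτ hμ0 hπ''pol hπ' hfull hpos
    set w : ℝ := (Q s0 a0 - Φ s0) / 2 with hwdef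
    have habs : ∀ T, t0 < T →
        |w| * (γ ^ t0 * stateDist τ μ0 π' t0 s0) ≤ γ ^ T * C := by
      intro T hT
      have h1 : ∑ t ∈ Finset.range T, γ ^ t * (stateDist τ μ0 π' t s0 * w)
          = -(γ ^ T * E (stateDist τ μ0 π' T)) := by
        have h := hunroll T
        rw [hE0] at h
        linarith [h]
      calc |w| * (γ ^ t0 * stateDist τ μ0 π' t0 s0)
          ≤ |w| * ∑ t ∈ Finset.range T, γ ^ t * stateDist τ μ0 π' t s0 := by
            refine mul_le_mul_of_nonneg_left ?_ (abs_nonneg w)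
            exact Finset.single_le_sum
              (fun t _ => mul_nonneg (pow_nonneg hγ.1.le t)
                ((isDist_stateDist hτ hπ' hμ0 t).1 s0)) (Finset.mem_range.2 hT)
        _ = |∑ t ∈ Finset.range T, γ ^ t * (stateDist τ μ0 π' t s0 * w)| := by
            have h2 : ∑ t ∈ Finset.range T, γ ^ t * (stateDist τ μ0 π' t s0 * w)
                = (∑ t ∈ Finset.range T, γ ^ t * stateDist τ μ0 π' t s0) * w := by
              rw [Finset.sum_mul]
              exact Finset.sum_congr rfl fun t _ => by ring
            rw [h2, abs_mul, abs_of_nonneg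
              (Finset.sum_nonneg fun t _ => mul_nonneg (pow_nonneg hγ.1.le t)
                ((isDist_stateDist hτ hπ' hμ0 t).1 s0))]
            ring
        _ = |γ ^ T * E (stateDist τ μ0 π' T)| := by rw [h1, abs_neg]
        _ ≤ γ ^ T * C := by
            rw [abs_mul, abs_of_nonneg (pow_nonneg hγ.1.le T)]
            exact mul_le_mul_of_nonneg_left
              (hCb _ (isDist_stateDist hτ hπ' hμ0 T)) (pow_nonneg hγ.1.le T)
    have hlim : Filter.Tendsto (fun T : ℕ => γ ^ T * C) Filter.atTop (nhds 0) := by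
      simpa using
        (tendsto_pow_atTop_nhds_zero_of_lt_one hγ.1.le hγ.2).mul_const C
    have hle : |w| * (γ ^ t0 * stateDist τ μ0 π' t0 s0) ≤ 0 :=
      ge_of_tendsto hlim (Filter.eventually_atTop.2
        ⟨t0 + 1, fun T hT => habs T (by omega)⟩)
    have hX : 0 < γ ^ t0 * stateDist τ μ0 π' t0 s0 :=
      mul_pos (pow_pos hγ.1 t0) hpos'
    have hw0 : |w| = 0 := by
      by_contra hcw
      have h : 0 < |w| := (abs_nonneg w).lt_of_ne (Ne.symm hcw)
      exact absurd hle (not_le.2 (mul_pos h hX))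
    have hthis : w = 0 := abs_eq_zero.1 hw0
    rw [hwdef] at hthis
    rcases div_eq_zero_iff.1 hthis with h9 | h9
    · exact sub_eq_zero.1 h9
    · norm_num at h9
  -- assemble DifferBy
  refine ⟨fun s a s' => R s a s' + γ * Φ s' - Φ s, ⟨Φ, fun s a s' => rfl⟩, ?_⟩
  intro s a
  have h := key s a
  simp only [hQdef] at h
  have hsum : ∑ s', τ s a s' * (R s a s' + γ * Φ s' - Φ s)
      = (∑ s', τ s a s' * R s a s') + γ * (∑ s', τ s a s' * Φ s') - Φ s := by
    have h1 : ∀ s', τ s a s' * (R s a s' + γ * Φ s' - Φ s)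
        = τ s a s' * R s a s' + γ * (τ s a s' * Φ s') - τ s a s' * Φ s := by
      intro s'; ring
    simp_rw [h1, Finset.sum_sub_distrib, Finset.sum_add_distrib, ← Finset.mul_sum]
    rw [← Finset.sum_mul, (hτ s a).2, one_mul]
  simp only [Pi.zero_apply, mul_zero, Finset.sum_const_zero]
  rw [hsum]
  linarith [h]

end NormProof3

/-- `max_π J(π) - min_π J(π)` is a norm on the image of any
canonicalisation function. -/
theorem maxJ_sub_minJ_is_norm_on_image
    {S A : Type*} [Fintype S] [Fintype A] [Nonempty S] [Nonempty A]
    (τ : S → A → S → ℝ) (hτ : ∀ s a, IsDist (τ s a))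
    (μ0 : S → ℝ) (hμ0 : IsDist μ0)
    (γ : ℝ) (hγ : γ ∈ Set.Ioo (0 : ℝ) 1)
    (hreach : AllReachable τ μ0)
    (c : Reward S A → Reward S A) (hc : IsCanon γ τ c) :
    IsNormOn (Set.range c) (fun R => maxJ τ μ0 γ R - minJ τ μ0 γ R) := by
  classical
  obtain ⟨hlin, hdiff, hiff⟩ := hc
  have hbddA : ∀ R : Reward S A,
      BddAbove (Set.range fun π : Policy S A => J τ μ0 γ R π.1) := by
    intro R
    refine ⟨Mb R * (1 - γ)⁻¹, ?_⟩
    rintro x ⟨π, rfl⟩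
    exact (abs_le.1 (abs_J_le hτ π.2 hμ0 hγ R)).2
  have hbddB : ∀ R : Reward S A,
      BddBelow (Set.range fun π : Policy S A => J τ μ0 γ R π.1) := by
    intro R
    refine ⟨-(Mb R * (1 - γ)⁻¹), ?_⟩
    rintro x ⟨π, rfl⟩
    exact (abs_le.1 (abs_J_le hτ π.2 hμ0 hγ R)).1
  have hub : ∀ (R : Reward S A) (π : Policy S A), J τ μ0 γ R π.1 ≤ maxJ τ μ0 γ R :=
    fun R π => le_ciSup (hbddA R) π
  have hlb : ∀ (R : Reward S A) (π : Policy S A), minJ τ μ0 γ R ≤ J τ μ0 γ R π.1 :=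
    fun R π => ciInf_le (hbddB R) π
  have hminle : ∀ R : Reward S A, minJ τ μ0 γ R ≤ maxJ τ μ0 γ R := by
    intro R
    have π : Policy S A := Classical.arbitrary _
    exact (hlb R π).trans (hub R π)
  refine ⟨?_, ?_, ?_, ?_⟩
  · -- nonnegativity
    intro x _
    simp only
    linarith [hminle x]
  · -- definiteness on the image
    intro x hx
    simp only
    constructor
    · intro h0
      have hconst : ∀ π' : Policy S A, J τ μ0 γ x π'.1 = J τ μ0 γ x (unif S A) := by
        intro π'
        have h1 := hub x π'
        have h2 := hlb x π'
        have h3 := hub x ⟨unif S A, isPolicy_unif⟩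
        have h4 := hlb x ⟨unif S A, isPolicy_unif⟩
        simp only at h3 h4
        linarith
      have hdz : DifferBy γ τ x 0 :=
        differBy_zero_of_J_const hτ hμ0 hγ hreach x hconst
      obtain ⟨R0, rfl⟩ := hx
      have hfix : c R0 = c (c R0) := (hiff R0 (c R0)).2 (hdiff R0)
      have hz : c (c R0) = c 0 := (hiff (c R0) 0).2 hdz
      exact hfix.trans (hz.trans hlin.map_zero)
    · intro h
      subst h
      have hfun : (fun π : Policy S A => J τ μ0 γ (0 : Reward S A) π.1)
          = fun _ => (0 : ℝ) := funext fun π => J_zero _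
      rw [maxJ, minJ, hfun, ciSup_const, ciInf_const, sub_zero]
  · -- absolute homogeneity
    intro x _ r
    simp only
    have hfs : (fun π : Policy S A => J τ μ0 γ (r • x) π.1)
        = fun π : Policy S A => r * J τ μ0 γ x π.1 := funext fun π => J_smul r x μ0
    rcases le_or_gt 0 r with hr | hr
    · have hmax : maxJ τ μ0 γ (r • x) = r * maxJ τ μ0 γ x := by
        rw [maxJ, hfs, ← Real.mul_iSup_of_nonneg hr, maxJ]
      have hmin : minJ τ μ0 γ (r • x) = r * minJ τ μ0 γ x := by
        rw [minJ, hfs, ← Real.mul_iInf_of_nonneg hr, minJ]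
      rw [hmax, hmin, abs_of_nonneg hr]
      ring
    · have hmax : maxJ τ μ0 γ (r • x) = r * minJ τ μ0 γ x := by
        rw [maxJ, hfs, ← Real.mul_iInf_of_nonpos hr.le, minJ]
      have hmin : minJ τ μ0 γ (r • x) = r * maxJ τ μ0 γ x := by
        rw [minJ, hfs, ← Real.mul_iSup_of_nonpos hr.le, maxJ]
      rw [hmax, hmin, abs_of_neg hr]
      ring
  · -- triangle inequality
    intro x _ y _
    simp only
    have hJa : ∀ π : Policy S A, J τ μ0 γ (x + y) π.1
        = J τ μ0 γ x π.1 + J τ μ0 γ y π.1 := fun π => J_add hτ π.2 hμ0 hγ x y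
    have hmax : maxJ τ μ0 γ (x + y) ≤ maxJ τ μ0 γ x + maxJ τ μ0 γ y := by
      rw [maxJ]
      refine ciSup_le fun π => ?_
      rw [hJa π]
      exact add_le_add (hub x π) (hub y π)
    have hmin : minJ τ μ0 γ x + minJ τ μ0 γ y ≤ minJ τ μ0 γ (x + y) := by
      rw [minJ]
      refine le_ciInf fun π => ?_
      rw [hJa π]
      exact add_le_add (hlb x π) (hlb y π)
    linarith

end RewardPaper
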